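/- Let H be a real inner product space, Δt > 0, ℒ ≥ M ≥ 0, γ ≥ 0, and suppose e^{j+1}, e^j ∈ H and g ∈ H satisfy ⟨e^{j+1}, e^{j+1}⟩(1 + Δt·ℒ) + γΔt‖g‖² ≤ Δt·ℒ‖e^j‖‖e^{j+1}‖. Then ‖e^{j+1}‖² + (2γΔt/(2+Δt·ℒ))‖g‖² ≤ (Δt·ℒ/(2+Δt·ℒ))‖e^j‖². -/

import Mathlib

/-! Young's inequality `a y x ≤ a/2 (y² + x²)` absorbs half of the cross term into the left-hand
side, leaving `x² (2 + a)/2 + c ≤ (a/2) y²`; dividing by `(2 + a)/2` gives the contraction. -/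

theorem sq_add_div_le_of_sq_mul_add_le {a x y c : ℝ} (ha : 0 ≤ a)
    (h : x ^ 2 * (1 + a) + c ≤ a * y * x) :
    x ^ 2 + 2 * c / (2 + a) ≤ a / (2 + a) * y ^ 2 := by
  have young : a * y * x ≤ a / 2 * (y ^ 2 + x ^ 2) := by
    nlinarith [two_mul_le_add_sq y x]
  have hden : 0 < 2 + a := by positivity
  calc x ^ 2 + 2 * c / (2 + a) = 2 / (2 + a) * (x ^ 2 * ((2 + a) / 2) + c) := by
        field_simp
    _ ≤ 2 / (2 + a) * (a / 2 * y ^ 2) := by gcongr; linarith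
    _ = a / (2 + a) * y ^ 2 := by ring

theorem lscheme_contraction_step_general {H : Type*} [NormedAddCommGroup H]
    [InnerProductSpace ℝ H]
    (Δt L M γ : ℝ) (hΔt : 0 < Δt) (hM : 0 ≤ M) (hL : M ≤ L)
    (e1 e0 g : H)
    (h : (inner ℝ e1 e1 : ℝ) * (1 + Δt * L) + γ * Δt * ‖g‖ ^ 2
          ≤ Δt * L * ‖e0‖ * ‖e1‖) :
    ‖e1‖ ^ 2 + (2 * γ * Δt / (2 + Δt * L)) * ‖g‖ ^ 2
      ≤ (Δt * L / (2 + Δt * L)) * ‖e0‖ ^ 2 := by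
  rw [real_inner_self_eq_norm_sq] at h
  have hΔtL : 0 ≤ Δt * L := mul_nonneg hΔt.le (hM.trans hL)
  convert sq_add_div_le_of_sq_mul_add_le hΔtL h using 2
  ring

/-- Key algebraic step of the L-scheme contraction proof: if
`⟨e^{j+1}, e^{j+1}⟩(1 + Δt·ℒ) + γΔt‖g‖² ≤ Δt·ℒ‖e^j‖‖e^{j+1}‖` then
`‖e^{j+1}‖² + (2γΔt/(2+Δt·ℒ))‖g‖² ≤ (Δt·ℒ/(2+Δt·ℒ))‖e^j‖²`. -/
theorem lscheme_contraction_step {H : Type*} [NormedAddCommGroup H]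
    [InnerProductSpace ℝ H]
    (Δt L M γ : ℝ) (hΔt : 0 < Δt) (hM : 0 ≤ M) (hL : M ≤ L) (hγ : 0 ≤ γ)
    (e1 e0 g : H)
    (h : (inner ℝ e1 e1 : ℝ) * (1 + Δt * L) + γ * Δt * ‖g‖ ^ 2
          ≤ Δt * L * ‖e0‖ * ‖e1‖) :
    ‖e1‖ ^ 2 + (2 * γ * Δt / (2 + Δt * L)) * ‖g‖ ^ 2
      ≤ (Δt * L / (2 + Δt * L)) * ‖e0‖ ^ 2 :=
  lscheme_contraction_step_general Δt L M γ hΔt hM hL e1 e0 g h
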